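/- Under the assumption M ⊥ R | X, Y, G=1, the missing-data outcome distribution is recovered as p(Y=y | R=0, X=x, M=m, G=1) = p(Y=y | R=1, X=x, M=m, G=1) · OR(x,y) / E[OR(X,Y) | R=1, X=x, M=m, G=1], where OR(x,y) = [p(R=0|X=x,Y=y,G=1) p(R=1|X=x,Y=0,G=1)] / [p(R=1|X=x,Y=y,G=1) p(R=0|X=x,Y=0,G=1)]. -/

import Mathlib

/-!
Fix `x` and `m` and write `ρ y = p(R=0 | x,y,G=1) / p(R=1 | x,y,G=1)` for the odds of missingness.
Conditional independence of `M` and `R` given `X, Y, G=1` gives, fibre by fibre in `Y`,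
`p(Y=y, R=0, x, m, G=1) = ρ y · p(Y=y, R=1, x, m, G=1)`. Summing over `y` and normalising yields
the formula, since `OR(x, y) = ρ y / ρ 0` and the factor `ρ 0` cancels between numerator and
denominator.
-/

open Finset Set Real

noncomputable def Pr {Ω : Type*} [Fintype Ω] (μ : Ω → ℝ) (A : Set Ω) : ℝ :=
  ∑ ω, A.indicator μ ω

noncomputable def cPr {Ω : Type*} [Fintype Ω] (μ : Ω → ℝ) (A B : Set Ω) : ℝ :=
  Pr μ (A ∩ B) / Pr μ B

noncomputable def cE {Ω : Type*} [Fintype Ω] (μ : Ω → ℝ) (f : Ω → ℝ) (B : Set Ω) : ℝ :=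
  (∑ ω, B.indicator (fun ω' => μ ω' * f ω') ω) / Pr μ B

noncomputable def OddsR {Ω 𝓧 : Type*} [Fintype Ω] (μ : Ω → ℝ) (X : Ω → 𝓧) (Y : Ω → ℝ)
    (R G : Ω → ℕ) (x : 𝓧) (y : ℝ) : ℝ :=
  (cPr μ {ω | R ω = 0} {ω | X ω = x ∧ Y ω = y ∧ G ω = 1} *
      cPr μ {ω | R ω = 1} {ω | X ω = x ∧ Y ω = 0 ∧ G ω = 1}) /
  (cPr μ {ω | R ω = 1} {ω | X ω = x ∧ Y ω = y ∧ G ω = 1} *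
      cPr μ {ω | R ω = 0} {ω | X ω = x ∧ Y ω = 0 ∧ G ω = 1})

section Events

variable {Ω : Type*} [Fintype Ω] {μ : Ω → ℝ}

theorem Pr_mono (hμ : ∀ ω, 0 ≤ μ ω) {A B : Set Ω} (h : A ⊆ B) : Pr μ A ≤ Pr μ B :=
  Finset.sum_le_sum fun _ _ => Set.indicator_le_indicator_of_subset h hμ _

theorem sum_indicator_eq_sum_fiber {β : Type*} [DecidableEq β] (f : Ω → ℝ) (Y : Ω → β)
    (B : Set Ω) :
    ∑ ω, B.indicator f ω = ∑ y ∈ Finset.univ.image Y, ∑ ω, ({ω | Y ω = y} ∩ B).indicator f ω := by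
  rw [← Finset.sum_fiberwise_of_maps_to (g := Y) (t := Finset.univ.image Y)
    (fun ω _ => Finset.mem_image_of_mem Y (Finset.mem_univ ω))]
  refine Finset.sum_congr rfl fun y _ => ?_
  rw [Finset.sum_filter, ← Set.indicator_indicator]
  exact Finset.sum_congr rfl fun ω _ => by simp only [Set.indicator_apply, Set.mem_ofPred_eq]

theorem Pr_eq_sum_fiber {β : Type*} [DecidableEq β] (μ : Ω → ℝ) (Y : Ω → β) (B : Set Ω) :
    Pr μ B = ∑ y ∈ Finset.univ.image Y, Pr μ ({ω | Y ω = y} ∩ B) :=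
  sum_indicator_eq_sum_fiber μ Y B

theorem sum_indicator_mul_eq_sum_fiber {β : Type*} [DecidableEq β] (μ f : Ω → ℝ) (Y : Ω → β)
    (g : β → ℝ) (B : Set Ω) (hfg : ∀ ω ∈ B, f ω = g (Y ω)) :
    ∑ ω, B.indicator (fun ω => μ ω * f ω) ω =
      ∑ y ∈ Finset.univ.image Y, g y * Pr μ ({ω | Y ω = y} ∩ B) := by
  rw [sum_indicator_eq_sum_fiber _ Y]
  refine Finset.sum_congr rfl fun y _ => ?_
  rw [Pr, Finset.mul_sum]
  refine Finset.sum_congr rfl fun ω _ => ?_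
  by_cases hω : ω ∈ {ω | Y ω = y} ∩ B
  · rw [Set.indicator_of_mem hω, Set.indicator_of_mem hω, hfg ω hω.2, hω.1, mul_comm]
  · rw [Set.indicator_of_notMem hω, Set.indicator_of_notMem hω, mul_zero]

theorem Pr_inter_eq_div_mul_of_condIndep {A E₀ E₁ S : Set Ω} (hS : Pr μ S ≠ 0)
    (hE₁ : Pr μ (E₁ ∩ S) ≠ 0)
    (h₀ : cPr μ (A ∩ E₀) S = cPr μ A S * cPr μ E₀ S)
    (h₁ : cPr μ (A ∩ E₁) S = cPr μ A S * cPr μ E₁ S) :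
    Pr μ (A ∩ E₀ ∩ S) = cPr μ E₀ S / cPr μ E₁ S * Pr μ (A ∩ E₁ ∩ S) := by
  unfold cPr at *
  field_simp at h₀ h₁ ⊢
  refine mul_right_cancel₀ hS ?_
  linear_combination Pr μ (E₁ ∩ S) * h₀ - Pr μ (E₀ ∩ S) * h₁

end Events

section MissingData

variable {Ω 𝓧 𝓜 : Type*} [Fintype Ω] {μ : Ω → ℝ} {X : Ω → 𝓧} {M : Ω → 𝓜} {Y : Ω → ℝ}
  {R G : Ω → ℕ}

noncomputable def missingOdds (μ : Ω → ℝ) (R : Ω → ℕ) (S : Set Ω) : ℝ :=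
  cPr μ {ω | R ω = 0} S / cPr μ {ω | R ω = 1} S

theorem missingOdds_pos (hμ : ∀ ω, 0 ≤ μ ω) {S : Set Ω}
    (h₀ : 0 < Pr μ ({ω | R ω = 0} ∩ S)) (h₁ : 0 < Pr μ ({ω | R ω = 1} ∩ S)) :
    0 < missingOdds μ R S := by
  have hS : 0 < Pr μ S := h₀.trans_le (Pr_mono hμ Set.inter_subset_right)
  exact div_pos (div_pos h₀ hS) (div_pos h₁ hS)

theorem OddsR_eq_div_missingOdds (x : 𝓧) (y : ℝ) :
    OddsR μ X Y R G x y = missingOdds μ R {ω | X ω = x ∧ Y ω = y ∧ G ω = 1} /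
      missingOdds μ R {ω | X ω = x ∧ Y ω = 0 ∧ G ω = 1} := by
  unfold OddsR missingOdds
  rw [div_div_eq_mul_div]
  ring

theorem Pr_fiber_missing_eq_missingOdds_mul (hμ : ∀ ω, 0 ≤ μ ω) {x : 𝓧} {m : 𝓜} {y : ℝ}
    (hcell : 0 < Pr μ {ω | X ω = x ∧ M ω = m ∧ Y ω = y ∧ R ω = 1 ∧ G ω = 1})
    (hCI : ∀ (m : 𝓜) (r : ℕ) (x : 𝓧) (y : ℝ),
      0 < Pr μ {ω | X ω = x ∧ Y ω = y ∧ G ω = 1} →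
      cPr μ {ω | M ω = m ∧ R ω = r} {ω | X ω = x ∧ Y ω = y ∧ G ω = 1} =
        cPr μ {ω | M ω = m} {ω | X ω = x ∧ Y ω = y ∧ G ω = 1} *
        cPr μ {ω | R ω = r} {ω | X ω = x ∧ Y ω = y ∧ G ω = 1}) :
    Pr μ ({ω | Y ω = y} ∩ {ω | R ω = 0 ∧ X ω = x ∧ M ω = m ∧ G ω = 1}) =
      missingOdds μ R {ω | X ω = x ∧ Y ω = y ∧ G ω = 1} *
        Pr μ ({ω | Y ω = y} ∩ {ω | R ω = 1 ∧ X ω = x ∧ M ω = m ∧ G ω = 1}) := by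
  set S := {ω | X ω = x ∧ Y ω = y ∧ G ω = 1}
  have hR₁S : 0 < Pr μ ({ω | R ω = 1} ∩ S) :=
    hcell.trans_le (Pr_mono hμ fun ω ⟨hX, _, hY, hR, hG⟩ => ⟨hR, hX, hY, hG⟩)
  have hS : 0 < Pr μ S := hR₁S.trans_le (Pr_mono hμ Set.inter_subset_right)
  have hcell_eq : ∀ r : ℕ, {ω | Y ω = y} ∩ {ω | R ω = r ∧ X ω = x ∧ M ω = m ∧ G ω = 1} =
      {ω | M ω = m} ∩ {ω | R ω = r} ∩ S := fun r => by
    ext ω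
    simp only [S, Set.mem_inter_iff, Set.mem_ofPred_eq]
    tauto
  rw [hcell_eq, hcell_eq]
  exact Pr_inter_eq_div_mul_of_condIndep hS.ne' hR₁S.ne' (hCI m 0 x y hS) (hCI m 1 x y hS)

end MissingData

theorem stmt3_general
    {Ω 𝓧 𝓜 : Type*} [Fintype Ω]
    (μ : Ω → ℝ) (X : Ω → 𝓧) (M : Ω → 𝓜) (Y : Ω → ℝ) (R G : Ω → ℕ)
    (hμ0 : ∀ ω, 0 ≤ μ ω)
    (h0Y : (0 : ℝ) ∈ Set.range Y)
    (hpos : ∀ x ∈ Set.range X, ∀ m ∈ Set.range M, ∀ y ∈ Set.range Y, ∀ r : ℕ,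
      (r = 0 ∨ r = 1) →
      0 < Pr μ {ω | X ω = x ∧ M ω = m ∧ Y ω = y ∧ R ω = r ∧ G ω = 1})
    (hCI : ∀ (m : 𝓜) (r : ℕ) (x : 𝓧) (y : ℝ),
      0 < Pr μ {ω | X ω = x ∧ Y ω = y ∧ G ω = 1} →
      cPr μ {ω | M ω = m ∧ R ω = r} {ω | X ω = x ∧ Y ω = y ∧ G ω = 1} =
        cPr μ {ω | M ω = m} {ω | X ω = x ∧ Y ω = y ∧ G ω = 1} *
        cPr μ {ω | R ω = r} {ω | X ω = x ∧ Y ω = y ∧ G ω = 1})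
 :
    ∀ x ∈ Set.range X, ∀ y ∈ Set.range Y, ∀ m ∈ Set.range M,
      cPr μ {ω | Y ω = y} {ω | R ω = 0 ∧ X ω = x ∧ M ω = m ∧ G ω = 1} =
        cPr μ {ω | Y ω = y} {ω | R ω = 1 ∧ X ω = x ∧ M ω = m ∧ G ω = 1} *
          OddsR μ X Y R G x y /
          cE μ (fun ω => OddsR μ X Y R G (X ω) (Y ω))
            {ω | R ω = 1 ∧ X ω = x ∧ M ω = m ∧ G ω = 1} := by
  intro x hx y hy m hm
  set ρ := fun y' => missingOdds μ R {ω | X ω = x ∧ Y ω = y' ∧ G ω = 1}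
  set A := {ω | R ω = 0 ∧ X ω = x ∧ M ω = m ∧ G ω = 1}
  set B := {ω | R ω = 1 ∧ X ω = x ∧ M ω = m ∧ G ω = 1}
  have htilt : ∀ y' ∈ Finset.univ.image Y,
      Pr μ ({ω | Y ω = y'} ∩ A) = ρ y' * Pr μ ({ω | Y ω = y'} ∩ B) :=
    fun y' hy' => Pr_fiber_missing_eq_missingOdds_mul hμ0
      (hpos x hx m hm y' (by simpa using hy') 1 (Or.inr rfl)) hCI
  have hOR : ∀ y', OddsR μ X Y R G x y' = ρ y' / ρ 0 := OddsR_eq_div_missingOdds x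
  have hnum : ∑ ω, B.indicator (fun ω => μ ω * OddsR μ X Y R G (X ω) (Y ω)) ω =
      ∑ y' ∈ Finset.univ.image Y, ρ y' / ρ 0 * Pr μ ({ω | Y ω = y'} ∩ B) :=
    sum_indicator_mul_eq_sum_fiber μ _ Y _ B fun ω hω => by
      rw [hω.2.1, hOR]
  have hρ₀ : ρ 0 ≠ 0 := (missingOdds_pos hμ0
    ((hpos x hx m hm 0 h0Y 0 (Or.inl rfl)).trans_le (Pr_mono hμ0 fun ω h => by simp_all))
    ((hpos x hx m hm 0 h0Y 1 (Or.inr rfl)).trans_le (Pr_mono hμ0 fun ω h => by simp_all))).ne'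
  have hB : Pr μ B ≠ 0 := ((hpos x hx m hm y hy 1 (Or.inr rfl)).trans_le
    (Pr_mono hμ0 fun ω h => by simp_all [B])).ne'
  unfold cPr cE
  rw [htilt y (by simpa using hy), Pr_eq_sum_fiber μ Y A, Finset.sum_congr rfl htilt, hnum, hOR]
  simp only [div_mul_eq_mul_div, ← Finset.sum_div]
  field_simp

theorem stmt3
    {Ω 𝓧 𝓜 : Type*} [Fintype Ω]
    (μ : Ω → ℝ) (X : Ω → 𝓧) (M : Ω → 𝓜) (Y : Ω → ℝ) (R G : Ω → ℕ)
    (hμ0 : ∀ ω, 0 ≤ μ ω) (hμ1 : ∑ ω, μ ω = 1)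
    (hR : ∀ ω, R ω = 0 ∨ R ω = 1)
    (h0Y : (0 : ℝ) ∈ Set.range Y)
    (hpos : ∀ x ∈ Set.range X, ∀ m ∈ Set.range M, ∀ y ∈ Set.range Y, ∀ r : ℕ,
      (r = 0 ∨ r = 1) →
      0 < Pr μ {ω | X ω = x ∧ M ω = m ∧ Y ω = y ∧ R ω = r ∧ G ω = 1})
    (hCI : ∀ (m : 𝓜) (r : ℕ) (x : 𝓧) (y : ℝ),
      0 < Pr μ {ω | X ω = x ∧ Y ω = y ∧ G ω = 1} →
      cPr μ {ω | M ω = m ∧ R ω = r} {ω | X ω = x ∧ Y ω = y ∧ G ω = 1} =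
        cPr μ {ω | M ω = m} {ω | X ω = x ∧ Y ω = y ∧ G ω = 1} *
        cPr μ {ω | R ω = r} {ω | X ω = x ∧ Y ω = y ∧ G ω = 1})
 :
    ∀ x ∈ Set.range X, ∀ y ∈ Set.range Y, ∀ m ∈ Set.range M,
      cPr μ {ω | Y ω = y} {ω | R ω = 0 ∧ X ω = x ∧ M ω = m ∧ G ω = 1} =
        cPr μ {ω | Y ω = y} {ω | R ω = 1 ∧ X ω = x ∧ M ω = m ∧ G ω = 1} *
          OddsR μ X Y R G x y /
          cE μ (fun ω => OddsR μ X Y R G (X ω) (Y ω))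
            {ω | R ω = 1 ∧ X ω = x ∧ M ω = m ∧ G ω = 1} :=
  stmt3_general μ X M Y R G hμ0 h0Y hpos hCI
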